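/- Let τ_{i,0}, τ_{i,1} satisfy 1 ≥ τ_{i,0} ≥ τ_{i,1} ≥ 0 for i = 1..n with n ≥ 2. If τ_{i,0} = τ_{i,1} for all i ∈ {2,...,n−1} and ((τ_{1,0}² + τ_{1,1}²)(τ_{n,0}² + τ_{n,1}²))^{1/4} = (τ_{1,0}τ_{n,0} + τ_{1,1}τ_{n,1})^{1/2}, then S*_{n-Chain} = Ŝ*_{n-Chain}, i.e., ((τ_{1,0}² + τ_{1,1}²)(τ_{n,0}² + τ_{n,1}²))^{1/4} ∏_{i=2}^{n−1} √(τ_{i,0}) = sqrt(∏_{i=1}^n τ_{i,0} + ∏_{i=1}^n τ_{i,1}). -/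

import Mathlib

/-!
On the interior of the chain both singular values agree, so the two products over all sources
share the interior factor `P = ∏ τᵢ₀` and differ only at the two endpoints:
`∏ τᵢ₀ + ∏ τᵢ₁ = (τ₁₀ τₙ₀ + τ₁₁ τₙ₁) P`. The endpoint hypothesis replaces the fourth root by
`√(τ₁₀ τₙ₀ + τ₁₁ τₙ₁)`, and `√·` is multiplicative on nonnegative reals.
-/

open Finset

theorem Fin.prod_univ_eq_first_mul_last_mul_prod_interior {M : Type*} [CommMonoid M]
    (n : ℕ) (hn : 1 < n) (f : Fin n → M) :
    ∏ i, f i = f ⟨0, by omega⟩ * f ⟨n - 1, by omega⟩ *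
      ∏ i ∈ univ.filter (fun i : Fin n => 1 ≤ (i : ℕ) ∧ (i : ℕ) < n - 1), f i := by
  have hcompl : univ.filter (fun i : Fin n => ¬(1 ≤ (i : ℕ) ∧ (i : ℕ) < n - 1)) =
      {⟨0, by omega⟩, ⟨n - 1, by omega⟩} := by
    ext i
    simp only [mem_filter, mem_univ, true_and, mem_insert, mem_singleton, Fin.ext_iff]
    omega
  have hne : (⟨0, by omega⟩ : Fin n) ∉ ({⟨n - 1, by omega⟩} : Finset (Fin n)) := by
    simp only [mem_singleton, Fin.ext_iff]
    omega
  rw [← prod_filter_not_mul_prod_filter univ (fun i : Fin n => 1 ≤ (i : ℕ) ∧ (i : ℕ) < n - 1),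
    hcompl, prod_insert hne, prod_singleton, mul_assoc]

theorem chain_scores_equality_condition (n : ℕ) (hn : 2 ≤ n)
    (τ : Fin n → Fin 2 → ℝ)
    (h2 : ∀ i, τ i 1 ≤ τ i 0) (h3 : ∀ i, 0 ≤ τ i 1)
    (hmid : ∀ i : Fin n, 1 ≤ (i : ℕ) → (i : ℕ) < n - 1 → τ i 0 = τ i 1)
    (hends : (((τ ⟨0, by omega⟩ 0) ^ 2 + (τ ⟨0, by omega⟩ 1) ^ 2) *
          ((τ ⟨n - 1, by omega⟩ 0) ^ 2 + (τ ⟨n - 1, by omega⟩ 1) ^ 2)) ^ ((1 : ℝ) / 4) =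
        (τ ⟨0, by omega⟩ 0 * τ ⟨n - 1, by omega⟩ 0 +
          τ ⟨0, by omega⟩ 1 * τ ⟨n - 1, by omega⟩ 1) ^ ((1 : ℝ) / 2)) :
    (((τ ⟨0, by omega⟩ 0) ^ 2 + (τ ⟨0, by omega⟩ 1) ^ 2) *
          ((τ ⟨n - 1, by omega⟩ 0) ^ 2 + (τ ⟨n - 1, by omega⟩ 1) ^ 2)) ^ ((1 : ℝ) / 4) *
        (∏ i ∈ Finset.univ.filter (fun i : Fin n => 1 ≤ (i : ℕ) ∧ (i : ℕ) < n - 1),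
          Real.sqrt (τ i 0)) =
      Real.sqrt (∏ i, τ i 0 + ∏ i, τ i 1) := by
  have h0 (i : Fin n) : 0 ≤ τ i 0 := (h3 i).trans (h2 i)
  have hinterior : ∏ i ∈ univ.filter (fun i : Fin n => 1 ≤ (i : ℕ) ∧ (i : ℕ) < n - 1), τ i 1 =
      ∏ i ∈ univ.filter (fun i : Fin n => 1 ≤ (i : ℕ) ∧ (i : ℕ) < n - 1), τ i 0 :=
    prod_congr rfl fun i hi => (hmid i (mem_filter.1 hi).2.1 (mem_filter.1 hi).2.2).symm
  have hendpoints : 0 ≤ τ ⟨0, by omega⟩ 0 * τ ⟨n - 1, by omega⟩ 0 +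
      τ ⟨0, by omega⟩ 1 * τ ⟨n - 1, by omega⟩ 1 :=
    add_nonneg (mul_nonneg (h0 _) (h0 _)) (mul_nonneg (h3 _) (h3 _))
  rw [hends, ← Real.sqrt_eq_rpow, ← Real.sqrt_prod _ fun i _ => h0 i, ← Real.sqrt_mul hendpoints,
    Fin.prod_univ_eq_first_mul_last_mul_prod_interior n hn,
    Fin.prod_univ_eq_first_mul_last_mul_prod_interior n hn, hinterior, add_mul]
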